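/- Every quasitrace on a finite-dimensional C*-algebra is a linear trace. -/

import Mathlib

open scoped ComplexOrder

/-- The defining properties of a quasitrace on a (possibly nonunital) complex *-algebra,
except for the condition of extendability to 2×2 matrices: positivity, the trace
condition `τ(x*x) = τ(xx*)`, additivity `τ(x+iy) = τ(x)+iτ(y)` for self-adjoint `x, y`,
and linearity on commutative C*-subalgebras (rendered as additivity on commuting
self-adjoint elements together with scalar homogeneity). -/
def IsQuasitraceAux {B : Type*} [NonUnitalRing B] [StarRing B] [Module ℂ B] (σ : B → ℂ) : Prop :=
  (∀ x : B, 0 ≤ σ (star x * x)) ∧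
  (∀ x : B, σ (star x * x) = σ (x * star x)) ∧
  (∀ x y : B, IsSelfAdjoint x → IsSelfAdjoint y →
    σ (x + Complex.I • y) = σ x + Complex.I * σ y) ∧
  (∀ x y : B, IsSelfAdjoint x → IsSelfAdjoint y → Commute x y →
    σ (x + y) = σ x + σ y) ∧
  (∀ (c : ℂ) (x : B), IsSelfAdjoint x → σ (c • x) = c * σ x)

/-- A (2-)quasitrace: the quasitrace properties together with an extension to `M₂(A)`
with the same properties. -/
def IsQuasitrace {A : Type*} [NonUnitalRing A] [StarRing A] [Module ℂ A] (τ : A → ℂ) : Prop :=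
  IsQuasitraceAux τ ∧
    ∃ σ : Matrix (Fin 2) (Fin 2) A → ℂ, IsQuasitraceAux σ ∧
      ∀ a : A, σ (Matrix.single 0 0 a) = τ a

/-- A trace: a positive linear functional satisfying `τ(ab) = τ(ba)`. -/
def IsTrace {A : Type*} [NonUnitalRing A] [StarRing A] [Module ℂ A] (τ : A →ₗ[ℂ] ℂ) : Prop :=
  (∀ x : A, 0 ≤ τ (star x * x)) ∧ ∀ x y : A, τ (x * y) = τ (y * x)

/-!
The unit of a finite-dimensional C*-algebra is a finite orthogonal sum of minimal projections
`eᵢ` (those with `q A q = ℂ q`): a non-minimal projection `P` is split by a spectral projection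
of some self-adjoint element of `P A P`, and the dimension of the corner drops. For a minimal
`q` write `q x q = c_q(x) q`; then `c_q` is linear, for minimal `q, r` we have
`c_q(r) = c_r(q)`, and the trace condition applied to `q r` gives `c_q(r) τ(q) = c_q(r) τ(r)`.
Hence `φ = ∑ τ(eᵢ) c_{eᵢ}` is a linear functional agreeing with `τ` on minimal projections:
`φ(r) = τ(r) c_r(∑ eᵢ) = τ(r)`. Additivity of `τ` on commuting self-adjoint elements propagates
the agreement to all projections, then (spectral theorem) to all self-adjoint elements, and
finally, via `x = ℜ x + i ℑ x`, to all of `A`. The trace property of `φ` follows from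
`φ(x* x) = φ(x x*)` by polarization.
-/

theorem spectrum.finite_of_finiteDimensional {K A : Type*} [Field K] [Ring A] [Algebra K A]
    [FiniteDimensional K A] (a : A) : (spectrum K a).Finite := by
  nontriviality A
  refine (Polynomial.finite_setOfPred_isRoot
    (minpoly.ne_zero (Algebra.IsIntegral.isIntegral a))).subset fun k hk => ?_
  simpa [spectrum.zero_eq] using spectrum.subset_polynomial_aeval a (minpoly K a) ⟨k, hk, rfl⟩

section SpectralProjection

variable {A : Type*} [CStarAlgebra A] [FiniteDimensional ℂ A]

theorem CStarAlgebra.finite_spectrum_real (a : A) : (spectrum ℝ a).Finite :=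
  haveI := Module.Finite.trans (R := ℝ) ℂ A
  spectrum.finite_of_finiteDimensional a

theorem CStarAlgebra.continuousOn_spectrum (a : A) (f : ℝ → ℝ) :
    ContinuousOn f (spectrum ℝ a) :=
  (finite_spectrum_real a).continuousOn f

open CStarAlgebra

noncomputable def spectralProj (a : A) (l : ℝ) : A := cfc (Pi.single l 1 : ℝ → ℝ) a

theorem isStarProjection_spectralProj (a : A) (l : ℝ) : IsStarProjection (spectralProj a l) where
  isSelfAdjoint := cfc_predicate _ a
  isIdempotentElem := by
    rw [IsIdempotentElem, spectralProj, ← cfc_mul _ _ a (continuousOn_spectrum a _)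
      (continuousOn_spectrum a _)]
    congr 1
    ext t
    by_cases ht : t = l <;> simp [ht]

theorem spectralProj_mul_spectralProj_of_ne (a : A) {l m : ℝ} (hlm : l ≠ m) :
    spectralProj a l * spectralProj a m = 0 := by
  rw [spectralProj, spectralProj, ← cfc_mul _ _ a (continuousOn_spectrum a _)
    (continuousOn_spectrum a _), ← cfc_zero ℝ a]
  congr 1
  ext t
  by_cases ht : t = l <;> simp [Pi.single_apply, ht, hlm]

theorem mul_spectralProj {a : A} (ha : IsSelfAdjoint a) (l : ℝ) :
    a * spectralProj a l = l • spectralProj a l := by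
  nth_rw 1 [← cfc_id' ℝ a]
  rw [spectralProj, ← cfc_mul _ _ a (continuousOn_spectrum a _) (continuousOn_spectrum a _),
    ← cfc_smul l _ a (continuousOn_spectrum a _)]
  congr 1
  ext t
  by_cases ht : t = l <;> simp [ht]

theorem spectralProj_ne_zero {a : A} (ha : IsSelfAdjoint a) {l : ℝ} (hl : l ∈ spectrum ℝ a) :
    spectralProj a l ≠ 0 := by
  rw [spectralProj, ← cfc_zero ℝ a]
  intro h
  simpa using eqOn_of_cfc_eq_cfc h (continuousOn_spectrum a _) (continuousOn_spectrum a _) ha hl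

theorem sum_smul_spectralProj {a : A} (ha : IsSelfAdjoint a) :
    ∑ l ∈ (finite_spectrum_real a).toFinset, l • spectralProj a l = a := by
  set S := (finite_spectrum_real a).toFinset
  calc ∑ l ∈ S, l • spectralProj a l
      = ∑ l ∈ S, cfc (fun t => l • (Pi.single l 1 : ℝ → ℝ) t) a :=
        Finset.sum_congr rfl fun l _ => (cfc_smul l _ a (continuousOn_spectrum a _)).symm
    _ = cfc (∑ l ∈ S, fun t => l • (Pi.single l 1 : ℝ → ℝ) t) a :=
        (cfc_sum _ a S fun l _ => continuousOn_spectrum a _).symm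
    _ = cfc id a := cfc_congr fun t ht => by
        simp [Pi.single_apply, S, (finite_spectrum_real a).mem_toFinset.mpr ht]
    _ = a := cfc_id ℝ a

end SpectralProjection

section MinimalProjection

variable {A : Type*} [CStarAlgebra A]

/-- Minimality is encoded as `q A q = ℂ q`, which for a nonzero projection in a C*-algebra is
equivalent to having no nonzero proper subprojection. -/
structure IsMinimalProjection (q : A) : Prop where
  isStarProjection : IsStarProjection q
  ne_zero : q ≠ 0
  exists_compress_eq_smul : ∀ x : A, ∃ c : ℂ, q * x * q = c • q

theorem IsMinimalProjection.isSelfAdjoint {q : A} (hq : IsMinimalProjection q) :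
    IsSelfAdjoint q :=
  hq.isStarProjection.isSelfAdjoint

theorem IsMinimalProjection.mul_self {q : A} (hq : IsMinimalProjection q) : q * q = q :=
  hq.isStarProjection.isIdempotentElem

theorem IsSelfAdjoint.mul_eq_left_iff {a b : A} (ha : IsSelfAdjoint a) (hb : IsSelfAdjoint b) :
    a * b = a ↔ b * a = a := by
  rw [← star_inj, star_mul, ha.star_eq, hb.star_eq]

noncomputable def corner (P : A) : Submodule ℂ A :=
  LinearMap.range (LinearMap.mulLeftRight ℂ (P, P))

theorem corner_lt_corner {P q : A} (hP : IsStarProjection P) (hq : IsStarProjection q)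
    (hqP : q * P = q) (hne : q ≠ P) : corner q < corner P := by
  have hPq : P * q = q := (hq.isSelfAdjoint.mul_eq_left_iff hP.isSelfAdjoint).mp hqP
  have hqq : q * q = q := hq.isIdempotentElem
  refine SetLike.lt_iff_le_and_exists.mpr ⟨?_, P, LinearMap.mem_range.mpr ⟨P, ?_⟩, ?_⟩
  · rintro _ ⟨w, rfl⟩
    refine ⟨q * w * q, ?_⟩
    simp only [LinearMap.mulLeftRight_apply]
    rw [show P * (q * w * q) * P = P * q * w * (q * P) by simp only [mul_assoc], hPq, hqP]
  · simp [hP.isIdempotentElem.eq]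
  · rintro ⟨w, hw⟩
    simp only [LinearMap.mulLeftRight_apply] at hw
    apply hne
    calc q = q * P * q := by rw [hqP, hqq]
      _ = P := by
        rw [← hw, show q * (q * w * q) * q = q * q * w * (q * q) by simp only [mul_assoc], hqq]

end MinimalProjection

section Subprojection

variable {A : Type*} [CStarAlgebra A]

open ComplexStarModule in
theorem exists_selfAdjoint_compress_ne_smul {P : A}
    (hP : ¬ ∀ x : A, ∃ c : ℂ, P * x * P = c • P) :
    ∃ y : A, IsSelfAdjoint y ∧ ∀ c : ℂ, P * y * P ≠ c • P := by
  by_contra! h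
  obtain ⟨x, hx⟩ := not_forall.mp hP
  obtain ⟨c₁, h₁⟩ := h _ (ℜ x).2
  obtain ⟨c₂, h₂⟩ := h _ (ℑ x).2
  refine hx ⟨c₁ + Complex.I * c₂, ?_⟩
  rw [← realPart_add_I_smul_imaginaryPart x, mul_add, add_mul, mul_smul_comm, smul_mul_assoc,
    h₁, h₂, smul_smul, add_smul]

variable [FiniteDimensional ℂ A]

open CStarAlgebra in
theorem IsStarProjection.exists_subprojection {P : A} (hP : IsStarProjection P)
    (hmin : ¬ ∀ x : A, ∃ c : ℂ, P * x * P = c • P) :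
    ∃ q : A, IsStarProjection q ∧ q ≠ 0 ∧ q ≠ P ∧ q * P = q := by
  obtain ⟨x, hx, hne⟩ := exists_selfAdjoint_compress_ne_smul hmin
  set y := P * x * P
  have hy : IsSelfAdjoint y := hx.conjugate_self hP.isSelfAdjoint
  have hPP : P * P = P := hP.isIdempotentElem
  have hPy : P * y = y := by simp only [y, ← mul_assoc, hPP]
  have hyP : y * P = y := by simp only [y, mul_assoc, hPP]
  obtain ⟨l, hl, hl0⟩ : ∃ l ∈ spectrum ℝ y, l ≠ 0 := by
    by_contra! h
    refine hne 0 ?_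
    rw [zero_smul, ← sum_smul_spectralProj hy]
    exact Finset.sum_eq_zero fun l hl => by
      rw [h l ((finite_spectrum_real y).mem_toFinset.mp hl), zero_smul]
  set q := spectralProj y l
  have hq := isStarProjection_spectralProj y l
  have hyq : y * q = l • q := mul_spectralProj hy l
  have hq_eq : q = l⁻¹ • (y * q) := by rw [hyq, smul_smul, inv_mul_cancel₀ hl0, one_smul]
  have hPq : P * q = q := by rw [hq_eq, mul_smul_comm, ← mul_assoc, hPy]
  refine ⟨q, hq, spectralProj_ne_zero hy hl, fun hqP => hne l ?_, ?_⟩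
  · rw [Complex.coe_smul, ← hqP, ← hyq, hqP, hyP]
  · exact (hq.isSelfAdjoint.mul_eq_left_iff hP.isSelfAdjoint).mpr hPq

end Subprojection

section Decomposition

theorem Finset.mul_sum_eq_of_pairwise_mul_eq_zero {R : Type*} [NonUnitalRing R] {s : Finset R}
    (hs : (s : Set R).Pairwise fun r r' => r * r' = 0) {r : R} (hr : r ∈ s)
    (hrr : IsIdempotentElem r) : r * ∑ r' ∈ s, r' = r := by
  rw [Finset.mul_sum, Finset.sum_eq_single_of_mem r hr fun r' hr' hne => hs hr hr' hne.symm, hrr]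

theorem Finset.sum_mul_eq_of_pairwise_mul_eq_zero {R : Type*} [NonUnitalRing R] {s : Finset R}
    (hs : (s : Set R).Pairwise fun r r' => r * r' = 0) {r : R} (hr : r ∈ s)
    (hrr : IsIdempotentElem r) : (∑ r' ∈ s, r') * r = r := by
  rw [Finset.sum_mul, Finset.sum_eq_single_of_mem r hr fun r' hr' hne => hs hr' hr hne, hrr]

variable {A : Type*} [CStarAlgebra A]

structure IsMinimalDecomposition (s : Finset A) (P : A) : Prop where
  isMinimalProjection : ∀ r ∈ s, IsMinimalProjection r
  pairwise_mul_eq_zero : (s : Set A).Pairwise fun r r' => r * r' = 0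
  sum_eq : ∑ r ∈ s, r = P

namespace IsMinimalDecomposition

variable {s s₁ s₂ : Finset A} {P q q' r : A}

theorem empty : IsMinimalDecomposition (∅ : Finset A) 0 :=
  ⟨by simp, by simp, by simp⟩

theorem singleton (hP : IsMinimalProjection P) : IsMinimalDecomposition {P} P :=
  ⟨by simpa using hP, by simp, by simp⟩

theorem mul_eq_left (hs : IsMinimalDecomposition s P) (hr : r ∈ s) : r * P = r :=
  hs.sum_eq ▸ Finset.mul_sum_eq_of_pairwise_mul_eq_zero hs.pairwise_mul_eq_zero hr
    (hs.isMinimalProjection r hr).mul_self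

theorem mul_eq_right (hs : IsMinimalDecomposition s P) (hr : r ∈ s) : P * r = r :=
  hs.sum_eq ▸ Finset.sum_mul_eq_of_pairwise_mul_eq_zero hs.pairwise_mul_eq_zero hr
    (hs.isMinimalProjection r hr).mul_self

theorem union [DecidableEq A] (h₁ : IsMinimalDecomposition s₁ q)
    (h₂ : IsMinimalDecomposition s₂ q') (hqq' : q * q' = 0) (hq'q : q' * q = 0) :
    IsMinimalDecomposition (s₁ ∪ s₂) (q + q') := by
  have hcross : ∀ r₁ ∈ s₁, ∀ r₂ ∈ s₂, r₁ * r₂ = 0 ∧ r₂ * r₁ = 0 := by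
    intro r₁ hr₁ r₂ hr₂
    constructor
    · rw [← h₁.mul_eq_left hr₁, ← h₂.mul_eq_right hr₂, mul_assoc, ← mul_assoc q,
        hqq', zero_mul, mul_zero]
    · rw [← h₂.mul_eq_left hr₂, ← h₁.mul_eq_right hr₁, mul_assoc, ← mul_assoc q',
        hq'q, zero_mul, mul_zero]
  have hdisj : Disjoint s₁ s₂ := Finset.disjoint_left.mpr fun r hr₁ hr₂ =>
    (h₁.isMinimalProjection r hr₁).ne_zero <| by
      rw [← (h₁.isMinimalProjection r hr₁).mul_self]
      exact (hcross r hr₁ r hr₂).1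
  refine ⟨?_, ?_, ?_⟩
  · simpa [or_imp, forall_and] using ⟨h₁.isMinimalProjection, h₂.isMinimalProjection⟩
  · rw [Finset.coe_union, Set.pairwise_union]
    exact ⟨h₁.pairwise_mul_eq_zero, h₂.pairwise_mul_eq_zero,
      fun r₁ hr₁ r₂ hr₂ _ => hcross r₁ hr₁ r₂ hr₂⟩
  · rw [Finset.sum_union hdisj, h₁.sum_eq, h₂.sum_eq]

end IsMinimalDecomposition

theorem IsStarProjection.exists_isMinimalDecomposition [FiniteDimensional ℂ A] {P : A}
    (hP : IsStarProjection P) : ∃ s : Finset A, IsMinimalDecomposition s P := by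
  classical
  induction h : Module.finrank ℂ (corner P) using Nat.strong_induction_on generalizing P with
  | _ N ih =>
  by_cases hP0 : P = 0
  · exact ⟨∅, hP0 ▸ .empty⟩
  by_cases hmin : ∀ x : A, ∃ c : ℂ, P * x * P = c • P
  · exact ⟨{P}, .singleton ⟨hP, hP0, hmin⟩⟩
  obtain ⟨q, hq, hq0, hqP, hqPq⟩ := hP.exists_subprojection hmin
  have hPq : P * q = q := (hq.isSelfAdjoint.mul_eq_left_iff hP.isSelfAdjoint).mp hqPq
  have hq' : IsStarProjection (P - q) := hq.sub_of_mul_eq_left hP hqPq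
  have hq'P : (P - q) * P = P - q := by rw [sub_mul, hP.isIdempotentElem.eq, hqPq]
  have hq'ne : P - q ≠ P := by rwa [Ne, sub_eq_self]
  obtain ⟨s₁, hs₁⟩ := ih _ (h ▸ Submodule.finrank_lt_finrank_of_lt
    (corner_lt_corner hP hq hqPq hqP)) hq rfl
  obtain ⟨s₂, hs₂⟩ := ih _ (h ▸ Submodule.finrank_lt_finrank_of_lt
    (corner_lt_corner hP hq' hq'P hq'ne)) hq' rfl
  refine ⟨s₁ ∪ s₂, add_sub_cancel q P ▸ hs₁.union hs₂ ?_ ?_⟩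
  · rw [mul_sub, hqPq, hq.isIdempotentElem.eq, sub_self]
  · rw [sub_mul, hPq, hq.isIdempotentElem.eq, sub_self]

end Decomposition

namespace IsQuasitraceAux

variable {B : Type*} [NonUnitalRing B] [StarRing B] [Module ℂ B] {σ : B → ℂ}
  (hσ : IsQuasitraceAux σ)
include hσ

theorem nonneg (x : B) : 0 ≤ σ (star x * x) := hσ.1 x

theorem map_star_mul_self_comm (x : B) : σ (star x * x) = σ (x * star x) := hσ.2.1 x

theorem map_add_I_smul {x y : B} (hx : IsSelfAdjoint x) (hy : IsSelfAdjoint y) :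
    σ (x + Complex.I • y) = σ x + Complex.I * σ y := hσ.2.2.1 x y hx hy

theorem map_add_of_commute {x y : B} (hx : IsSelfAdjoint x) (hy : IsSelfAdjoint y)
    (hxy : Commute x y) : σ (x + y) = σ x + σ y := hσ.2.2.2.1 x y hx hy hxy

theorem map_smul_of_isSelfAdjoint (c : ℂ) {x : B} (hx : IsSelfAdjoint x) :
    σ (c • x) = c * σ x := hσ.2.2.2.2 c x hx

theorem map_zero : σ 0 = 0 := by
  simpa using hσ.map_smul_of_isSelfAdjoint 0 (IsSelfAdjoint.zero B)

theorem map_sum_of_commute {ι : Type*} (s : Finset ι) (x : ι → B)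
    (hx : ∀ i ∈ s, IsSelfAdjoint (x i))
    (hcomm : (s : Set ι).Pairwise fun i j => Commute (x i) (x j)) :
    σ (∑ i ∈ s, x i) = ∑ i ∈ s, σ (x i) := by
  classical
  induction s using Finset.induction_on with
  | empty => simpa using hσ.map_zero
  | insert i s hi ih =>
    rw [Finset.coe_insert, Set.pairwise_insert] at hcomm
    rw [Finset.sum_insert hi, Finset.sum_insert hi, hσ.map_add_of_commute (hx i (by simp))
      (isSelfAdjoint_sum s fun j hj => hx j (by simp [hj]))
      (Commute.sum_right _ _ _ fun j hj => (hcomm.2 j hj (by rintro rfl; exact hi hj)).1),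
      ih (fun j hj => hx j (by simp [hj])) hcomm.1]

end IsQuasitraceAux

namespace IsMinimalProjection

variable {A : Type*} [CStarAlgebra A] {q r : A}

noncomputable def coeff (hq : IsMinimalProjection q) : A →ₗ[ℂ] ℂ where
  toFun x := (hq.exists_compress_eq_smul x).choose
  map_add' x y := smul_left_injective ℂ hq.ne_zero <| by
    dsimp only
    rw [add_smul, ← (hq.exists_compress_eq_smul _).choose_spec,
      ← (hq.exists_compress_eq_smul x).choose_spec,
      ← (hq.exists_compress_eq_smul y).choose_spec, mul_add, add_mul]
  map_smul' c x := smul_left_injective ℂ hq.ne_zero <| by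
    dsimp only
    rw [RingHom.id_apply, smul_eq_mul, ← smul_smul,
      ← (hq.exists_compress_eq_smul _).choose_spec,
      ← (hq.exists_compress_eq_smul x).choose_spec, mul_smul_comm, smul_mul_assoc]

theorem compress_eq_coeff_smul (hq : IsMinimalProjection q) (x : A) :
    q * x * q = hq.coeff x • q :=
  (hq.exists_compress_eq_smul x).choose_spec

theorem coeff_eq_of_compress_eq (hq : IsMinimalProjection q) {x : A} {c : ℂ}
    (h : q * x * q = c • q) : hq.coeff x = c :=
  smul_left_injective ℂ hq.ne_zero <| by simp only [← hq.compress_eq_coeff_smul, h]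

theorem coeff_one (hq : IsMinimalProjection q) : hq.coeff 1 = 1 :=
  hq.coeff_eq_of_compress_eq <| by rw [mul_one, hq.mul_self, one_smul]

/-- Both coefficients are read off from `q r q r = c • q r = c' • q r`; if `q r = 0`, both
vanish. -/
theorem coeff_comm (hq : IsMinimalProjection q) (hr : IsMinimalProjection r) :
    hq.coeff r = hr.coeff q := by
  have hqr : (hq.coeff r - hr.coeff q) • (q * r) = 0 := by
    rw [sub_smul, ← smul_mul_assoc, ← hq.compress_eq_coeff_smul, ← mul_smul_comm,
      ← hr.compress_eq_coeff_smul]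
    noncomm_ring
  rcases smul_eq_zero.mp hqr with h | h
  · exact sub_eq_zero.mp h
  · have hrq : r * q = 0 := by
      rw [← hq.isSelfAdjoint.star_eq, ← hr.isSelfAdjoint.star_eq, ← star_mul, h, star_zero]
    rw [hq.coeff_eq_of_compress_eq (c := 0) (by rw [h, zero_mul, zero_smul]),
      hr.coeff_eq_of_compress_eq (c := 0) (by rw [hrq, zero_mul, zero_smul])]

theorem coeff_mul_map_eq {τ : A → ℂ} (hτ : IsQuasitraceAux τ) (hq : IsMinimalProjection q)
    (hr : IsMinimalProjection r) : hq.coeff r * τ q = hq.coeff r * τ r := by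
  have hrqqr : r * q * (q * r) = r * q * r := by
    rw [mul_assoc, ← mul_assoc q, hq.mul_self, ← mul_assoc]
  have hqrrq : q * r * (r * q) = q * r * q := by
    rw [mul_assoc, ← mul_assoc r, hr.mul_self, ← mul_assoc]
  have h := hτ.map_star_mul_self_comm (q * r)
  rw [star_mul, hq.isSelfAdjoint.star_eq, hr.isSelfAdjoint.star_eq, hrqqr, hqrrq,
    hq.compress_eq_coeff_smul, hr.compress_eq_coeff_smul,
    hτ.map_smul_of_isSelfAdjoint _ hq.isSelfAdjoint,
    hτ.map_smul_of_isSelfAdjoint _ hr.isSelfAdjoint, hr.coeff_comm hq] at h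
  exact h.symm

end IsMinimalProjection

theorem LinearMap.map_mul_comm_of_map_star_mul_self {B : Type*} [NonUnitalRing B] [StarRing B]
    [Module ℂ B] [StarModule ℂ B] [IsScalarTower ℂ B B] [SMulCommClass ℂ B B]
    (f : B →ₗ[ℂ] ℂ)
    (hf : ∀ x, f (star x * x) = f (x * star x)) (x y : B) : f (x * y) = f (y * x) := by
  have hpol : ∀ u v : B, f (star u * v) - f (v * star u) = f (u * star v) - f (star v * u) := by
    intro u v
    have h := hf (u + v)
    simp only [star_add, add_mul, mul_add, map_add, hf u, hf v] at h
    linear_combination h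
  have h₁ := hpol (star x) y
  have h₂ := hpol (star x) (Complex.I • y)
  simp only [star_star, star_smul, Complex.star_def, Complex.conj_I, neg_smul, smul_mul_assoc,
    mul_smul_comm, mul_neg, neg_mul, map_neg, map_smul, smul_eq_mul] at h₁ h₂
  apply mul_left_cancel₀ (mul_ne_zero two_ne_zero Complex.I_ne_zero)
  linear_combination Complex.I * h₁ + h₂

namespace IsQuasitraceAux

variable {A : Type*} [CStarAlgebra A] [FiniteDimensional ℂ A] {τ : A → ℂ}
  (hτ : IsQuasitraceAux τ)
include hτ

theorem exists_linearMap_eq_on_minimalProjection :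
    ∃ φ : A →ₗ[ℂ] ℂ, ∀ r, IsMinimalProjection r → φ r = τ r := by
  obtain ⟨s, hs⟩ := (IsStarProjection.one A).exists_isMinimalDecomposition
  have he := hs.isMinimalProjection
  refine ⟨∑ e : s, τ e • (he e e.2).coeff, fun r hr => ?_⟩
  calc (∑ e : s, τ e • (he e e.2).coeff) r = ∑ e : s, τ r * hr.coeff e := by
        simp only [LinearMap.sum_apply, LinearMap.smul_apply, smul_eq_mul]
        refine Finset.sum_congr rfl fun e _ => ?_
        rw [mul_comm, (he e e.2).coeff_mul_map_eq hτ hr, (he e e.2).coeff_comm hr, mul_comm]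
    _ = τ r * hr.coeff (∑ e ∈ s, e) := by
        rw [map_sum, Finset.mul_sum, Finset.sum_coe_sort s (fun e => τ r * hr.coeff e)]
    _ = τ r := by rw [hs.sum_eq, hr.coeff_one, mul_one]

variable {φ : A →ₗ[ℂ] ℂ} (hφ : ∀ r, IsMinimalProjection r → φ r = τ r)
include hφ

theorem linearMap_apply_eq_of_isStarProjection {P : A} (hP : IsStarProjection P) : φ P = τ P := by
  obtain ⟨s, hs⟩ := hP.exists_isMinimalDecomposition
  have hcomm : (s : Set A).Pairwise fun r r' => Commute r r' := fun r hr r' hr' hne =>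
    (hs.pairwise_mul_eq_zero hr hr' hne).trans (hs.pairwise_mul_eq_zero hr' hr hne.symm).symm
  rw [← hs.sum_eq, map_sum]
  exact (Finset.sum_congr rfl fun r hr => hφ r (hs.isMinimalProjection r hr)).trans
    (hτ.map_sum_of_commute s _
      (fun r hr => (hs.isMinimalProjection r hr).isSelfAdjoint) hcomm).symm

theorem linearMap_apply_eq_of_isSelfAdjoint {a : A} (ha : IsSelfAdjoint a) : φ a = τ a := by
  have hp := isStarProjection_spectralProj a
  have hcomm : ∀ l m, l ≠ m → Commute (spectralProj a l) (spectralProj a m) := fun l m hlm =>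
    (spectralProj_mul_spectralProj_of_ne a hlm).trans
      (spectralProj_mul_spectralProj_of_ne a hlm.symm).symm
  rw [← sum_smul_spectralProj ha, map_sum]
  refine .trans (Finset.sum_congr rfl fun l _ => ?_) (hτ.map_sum_of_commute _ _
    (fun l _ => (IsSelfAdjoint.all l).smul (hp l).isSelfAdjoint)
    (fun l _ m _ hlm => ((hcomm l m hlm).smul_left l).smul_right m)).symm
  rw [← Complex.coe_smul, map_smul, hτ.map_smul_of_isSelfAdjoint _ (hp l).isSelfAdjoint,
    hτ.linearMap_apply_eq_of_isStarProjection hφ (hp l), smul_eq_mul]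

open ComplexStarModule in
theorem linearMap_apply_eq (a : A) : φ a = τ a := by
  rw [← realPart_add_I_smul_imaginaryPart a, map_add, map_smul, smul_eq_mul,
    hτ.map_add_I_smul (ℜ a).2 (ℑ a).2, hτ.linearMap_apply_eq_of_isSelfAdjoint hφ (ℜ a).2,
    hτ.linearMap_apply_eq_of_isSelfAdjoint hφ (ℑ a).2]

end IsQuasitraceAux

theorem quasitrace_isTrace_of_finiteDimensional {A : Type*} [CStarAlgebra A]
    [FiniteDimensional ℂ A] (τ : A → ℂ) (hτ : IsQuasitrace τ) :
    ∃ τ' : A →ₗ[ℂ] ℂ, IsTrace τ' ∧ ∀ a : A, τ a = τ' a := by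
  obtain ⟨φ, hφ⟩ := hτ.1.exists_linearMap_eq_on_minimalProjection
  have hφτ : ∀ a, φ a = τ a := hτ.1.linearMap_apply_eq hφ
  refine ⟨φ, ⟨fun x => ?_, φ.map_mul_comm_of_map_star_mul_self fun x => ?_⟩,
    fun a => (hφτ a).symm⟩
  · rw [hφτ]; exact hτ.1.nonneg x
  · rw [hφτ, hφτ]; exact hτ.1.map_star_mul_self_comm x
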